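/- Let (ρ, V) be the coisometric covariant extension of (π, T) constructed, on H ⊕ D* ⊕ D₁* ⊕ D₂* ⊕ ⋯, as the block matrix V with first row (T, D*, 0, 0, ...) and entries D_{k*} = W_k* on the superdiagonal thereafter, with ρ the diagonal of π, π̂, π̂₁, π̂₂, …. Then V is a coisometry: VV* = I. -/

import Mathlib

/-!
In the decomposition `H ⊕ 𝒟₀* ⊕ 𝒟₁* ⊕ ⋯` the adjoint `V*` sends `h ∈ H` to `T* h ⊕ W Δ* h` and
`d ∈ 𝒟ₖ*` to `W_{k+1} d ∈ 𝒟_{k+1}*`; these vectors lie in the defect spaces because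
`ρ(1) = 1`. Hence `V V*` fixes `H`, as `T T* + Δ* W* W Δ* = T T* + Δ*² = 1`, and fixes every
`𝒟ₖ*`, as `W_{k+1}* W_{k+1} = 1`. The summands span a dense subspace, so `V V* = 1`.
-/

open ContinuousLinearMap

lemma CStarAlgebra.one_sub_mul_star_nonneg {A : Type*} [CStarAlgebra A] [PartialOrder A]
    [StarOrderedRing A] {a : A} (ha : ‖a‖ ≤ 1) : 0 ≤ 1 - a * star a := by
  refine sub_nonneg.mpr ((CStarAlgebra.norm_le_one_iff_of_nonneg _).mp ?_)
  rw [CStarRing.norm_self_mul_star]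
  exact mul_le_one₀ ha (norm_nonneg a) ha

lemma Submodule.adjoint_subtypeL_apply_of_mem {E : Type*} [NormedAddCommGroup E]
    [InnerProductSpace ℂ E] [CompleteSpace E] (U : Submodule ℂ E) [CompleteSpace U] {x : E}
    (hx : x ∈ U) : adjoint U.subtypeL x = ⟨x, hx⟩ := by
  rw [U.adjoint_subtypeL]
  exact U.orthogonalProjectionOnto_mem_subspace_eq_self ⟨x, hx⟩

lemma ContinuousLinearMap.adjoint_apply_adjoint_apply {E F G : Type*}
    [NormedAddCommGroup E] [InnerProductSpace ℂ E] [CompleteSpace E]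
    [NormedAddCommGroup F] [InnerProductSpace ℂ F] [CompleteSpace F]
    [NormedAddCommGroup G] [InnerProductSpace ℂ G] [CompleteSpace G]
    (f : F →L[ℂ] E) (V : E →L[ℂ] E) (g : G →L[ℂ] E) (x : F) :
    adjoint g (adjoint V (f x)) = adjoint (adjoint f ∘L V ∘L g) x := by
  simp [adjoint_comp]

section OrthogonalSum

variable {E F : Type*} [NormedAddCommGroup E] [InnerProductSpace ℂ E] [CompleteSpace E]
  [NormedAddCommGroup F] [InnerProductSpace ℂ F] [CompleteSpace F]
  {ι : Type*} {G : ι → Type*} [∀ i, NormedAddCommGroup (G i)] [∀ i, InnerProductSpace ℂ (G i)]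
  [∀ i, CompleteSpace (G i)]

/-- `E` is the internal Hilbert sum `F ⊕ ⨁ᵢ G i`, via the isometries `e` and `u i`. -/
structure IsOrthogonalSum (e : F →L[ℂ] E) (u : ∀ i, G i →L[ℂ] E) : Prop where
  adjoint_comp_head : adjoint e ∘L e = 1
  adjoint_comp_tail : ∀ i, adjoint (u i) ∘L u i = 1
  adjoint_head_comp_tail : ∀ i, adjoint e ∘L u i = 0
  adjoint_tail_comp_tail : ∀ i j, i ≠ j → adjoint (u i) ∘L u j = 0
  dense : (LinearMap.range (e : F →ₗ[ℂ] E) ⊔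
    ⨆ i, LinearMap.range (u i : G i →ₗ[ℂ] E)).topologicalClosure = ⊤

namespace IsOrthogonalSum

variable {e : F →L[ℂ] E} {u : ∀ i, G i →L[ℂ] E}

theorem ext {E' : Type*} [AddCommGroup E'] [Module ℂ E'] [TopologicalSpace E']
    [IsTopologicalAddGroup E'] [ContinuousConstSMul ℂ E'] [T2Space E']
    (hS : IsOrthogonalSum e u) {X Y : E →L[ℂ] E'}
    (he : X ∘L e = Y ∘L e) (hu : ∀ i, X ∘L u i = Y ∘L u i) : X = Y := by
  have hker : LinearMap.range (e : F →ₗ[ℂ] E) ⊔ ⨆ i, LinearMap.range (u i : G i →ₗ[ℂ] E) ≤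
      LinearMap.ker ((X - Y : E →L[ℂ] E') : E →ₗ[ℂ] E') := by
    refine sup_le ?_ (iSup_le fun i => ?_) <;> rintro _ ⟨x, rfl⟩
    · simpa [sub_eq_zero] using congr($he x)
    · simpa [sub_eq_zero] using congr($(hu i) x)
  have htop := Submodule.topologicalClosure_minimal _ hker (X - Y).isClosed_ker
  rw [hS.dense] at htop
  ext x
  simpa [sub_eq_zero] using htop (Submodule.mem_top (x := x))

theorem eq_of_adjoint_apply_eq (hS : IsOrthogonalSum e u) {x y : E}
    (he : adjoint e x = adjoint e y) (hu : ∀ i, adjoint (u i) x = adjoint (u i) y) : x = y := by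
  have hdense := hS.dense
  rw [Submodule.topologicalClosure_eq_top_iff, ← Submodule.inf_orthogonal,
    ← Submodule.iInf_orthogonal] at hdense
  rw [← sub_eq_zero, ← Submodule.mem_bot ℂ, ← hdense]
  refine ⟨?_, Submodule.mem_iInf _ |>.mpr fun i => ?_⟩
  · simp [orthogonal_range, he]
  · simp [orthogonal_range, hu i]

theorem eq_add_of_adjoint_apply_eq (hS : IsOrthogonalSum e u) {y : E} {a : F} {i : ι} {b : G i}
    (hya : adjoint e y = a) (hyb : adjoint (u i) y = b) (hy : ∀ j ≠ i, adjoint (u j) y = 0) :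
    y = e a + u i b := by
  have hue : ∀ j, adjoint (u j) ∘L e = 0 := fun j => by
    simpa [adjoint_comp] using congr(adjoint $(hS.adjoint_head_comp_tail j))
  obtain ⟨he, hu, heu, huu, -⟩ := id hS
  simp only [ContinuousLinearMap.ext_iff, comp_apply, zero_apply] at he hu heu huu hue
  refine hS.eq_of_adjoint_apply_eq ?_ fun j => ?_
  · simp [hya, he, heu]
  · rcases eq_or_ne j i with rfl | hji
    · simp [hyb, hue, hu]
    · simp [hy j hji, hue, huu j i hji]

end IsOrthogonalSum

end OrthogonalSum

theorem block_extension_coisometry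
    {A : Type*} [CStarAlgebra A]
    {H : Type*} [NormedAddCommGroup H] [InnerProductSpace ℂ H] [CompleteSpace H]
    -- the ambient Hilbert spaces `K₀, K₁, K₂, …` of the inductive construction:
    {Kamb : ℕ → Type*} [∀ k, NormedAddCommGroup (Kamb k)]
    [∀ k, InnerProductSpace ℂ (Kamb k)] [∀ k, CompleteSpace (Kamb k)]
    {KK : Type*} [NormedAddCommGroup KK] [InnerProductSpace ℂ KK] [CompleteSpace KK]
    (T : H →L[ℂ] H) (hT : ‖T‖ ≤ 1)
    (Δstar : H →L[ℂ] H) (hΔ : Δstar = CFC.sqrt (1 - T * star T))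
    -- the representations `ρ₀ = π₀, π₁, π₂, …` on the ambient spaces:
    (ρreps : ∀ k, A →⋆ₐ[ℂ] (Kamb k →L[ℂ] Kamb k))
    -- the isometry `W : H → K₀` from the extension lemma:
    (W0 : H →L[ℂ] Kamb 0) (hW0 : adjoint W0 ∘L W0 = 1)
    -- the defect spaces `𝒟₀*, 𝒟₁*, …`:
    (Dsub : ∀ k, Submodule ℂ (Kamb k)) [∀ k, CompleteSpace (Dsub k)]
    (hD0 : Dsub 0 = (Submodule.span ℂ
      {x : Kamb 0 | ∃ (a : A) (h : H), x = ρreps 0 a (W0 (Δstar h))}).topologicalClosure)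
    -- the isometries `W_{k+1} : 𝒟ₖ* → K_{k+1}`:
    (Wk : ∀ k, (Dsub k →L[ℂ] Kamb (k + 1)))
    (hWk : ∀ k, adjoint (Wk k) ∘L Wk k = 1)
    (hDk : ∀ k, Dsub (k + 1) = (Submodule.span ℂ
      {x : Kamb (k + 1) | ∃ (a : A) (y : Dsub k),
        x = ρreps (k + 1) a (Wk k y)}).topologicalClosure)
    -- `KK = H ⊕ 𝒟₀* ⊕ 𝒟₁* ⊕ ⋯`, internally:
    (e : H →L[ℂ] KK) (u : ∀ k, (Dsub k →L[ℂ] KK))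
    (he : adjoint e ∘L e = 1) (hu : ∀ k, adjoint (u k) ∘L u k = 1)
    (heu : ∀ k, adjoint e ∘L u k = 0)
    (huu : ∀ m n, m ≠ n → adjoint (u m) ∘L u n = 0)
    (htotal : (LinearMap.range (e : H →ₗ[ℂ] KK) ⊔ ⨆ k, LinearMap.range ((u k : Dsub k →ₗ[ℂ] KK))).topologicalClosure = ⊤)
    -- the matrix entries of `V`: first row `(T, D* = Δ* W* |𝒟₀*, 0, 0, …)`,
    -- then the superdiagonal `D_{k+1 *} = W_{k+1}* |𝒟_{k+1}*`:
    (V : KK →L[ℂ] KK)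
    (hV00 : adjoint e ∘L V ∘L e = T)
    (hV01 : adjoint e ∘L V ∘L u 0 = Δstar ∘L adjoint W0 ∘L (Dsub 0).subtypeL)
    (hVsup : ∀ k, adjoint (u k) ∘L V ∘L u (k + 1) = adjoint (Wk k) ∘L (Dsub (k + 1)).subtypeL)
    (hVe : ∀ k, adjoint (u k) ∘L V ∘L e = 0)
    (hV0k : ∀ k, k ≠ 0 → adjoint e ∘L V ∘L u k = 0)
    (hVmn : ∀ m n, n ≠ m + 1 → adjoint (u m) ∘L V ∘L u n = 0) :
    V ∘L adjoint V = 1 := by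
  have hS : IsOrthogonalSum e u := ⟨he, hu, heu, huu, htotal⟩
  have hΔ_sa : adjoint Δstar = Δstar := by
    rw [← star_eq_adjoint, hΔ]
    exact (CFC.sqrt_nonneg _).isSelfAdjoint
  have hΔ_sq : ∀ h, Δstar (Δstar h) = h - T (adjoint T h) := fun h => by
    have := CFC.sqrt_mul_sqrt_self _ (CStarAlgebra.one_sub_mul_star_nonneg hT)
    rw [← hΔ] at this
    simpa [star_eq_adjoint] using congr($this h)
  have hmem0 : ∀ h, W0 (Δstar h) ∈ Dsub 0 := fun h =>
    hD0 ▸ Submodule.le_topologicalClosure _ (Submodule.subset_span ⟨1, h, by simp⟩)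
  have hmemk : ∀ k (d : Dsub k), Wk k d ∈ Dsub (k + 1) := fun k d =>
    hDk k ▸ Submodule.le_topologicalClosure _ (Submodule.subset_span ⟨1, d, by simp⟩)
  have hVadj_e : ∀ h, adjoint V (e h) = e (adjoint T h) + u 0 ⟨W0 (Δstar h), hmem0 h⟩ :=
    fun h => hS.eq_add_of_adjoint_apply_eq (by rw [adjoint_apply_adjoint_apply, hV00])
      (by simp [adjoint_apply_adjoint_apply, hV01, adjoint_comp, hΔ_sa,
        Submodule.adjoint_subtypeL_apply_of_mem _ (hmem0 h)])
      (fun k hk => by simp [adjoint_apply_adjoint_apply, hV0k k hk])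
  have hVadj_u : ∀ k (d : Dsub k), adjoint V (u k d) = u (k + 1) ⟨Wk k d, hmemk k d⟩ := by
    intro k d
    simpa using hS.eq_add_of_adjoint_apply_eq (a := 0) (by simp [adjoint_apply_adjoint_apply, hVe])
      (by simp [adjoint_apply_adjoint_apply, hVsup, adjoint_comp,
        Submodule.adjoint_subtypeL_apply_of_mem _ (hmemk k d)])
      (fun m hm => by simp [adjoint_apply_adjoint_apply, hVmn k m hm])
  simp only [ContinuousLinearMap.ext_iff, comp_apply, zero_apply]
    at hW0 hWk hV00 hV01 hVsup hVe hV0k hVmn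
  refine hS.ext (ext fun h => ?_) fun k => ext fun d => ?_
  · simpa using hS.eq_add_of_adjoint_apply_eq (i := 0) (b := 0)
      (by simp [hVadj_e, hV00, hV01, hW0, hΔ_sq]) (by simp [hVadj_e, hVe, hVmn])
      (fun k _ => by simp [hVadj_e, hVe, hVmn])
  · simpa using hS.eq_add_of_adjoint_apply_eq (a := 0) (b := d) (by simp [hVadj_u, hV0k])
      (by simp [hVadj_u, hVsup, hWk]) (fun m hm => by simp [hVadj_u, hVmn m (k + 1) (by omega)])
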